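/- arXiv:1407.6863 — 2 statements merged into one kernel-verified Lean document; each statement's English description precedes it below -/
import Mathlib

section
/- Let k > 0, m ∈ {1,2}, and let φ: ℝ^m → ℂ be a Schwartz function (or compactly supported smooth function). Define the sesquilinear value a(φ) := (i/2) ∫_{ℝ^m} (1/Z(ξ)) |φ̂(ξ)|² dξ, where Z(ξ) = √(k²−|ξ|²) for |ξ| ≤ k and i√(|ξ|²−k²) for |ξ| > k. Then |a(φ)| ≥ (1/(2√2)) ∫_{ℝ^m} (k² + |ξ|²)^{−1/2} |φ̂(ξ)|² dξ. -/
/-!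
Off the null sphere `|ξ| = k` one has `Re ((1 + i) / Z ξ) = |k² - |ξ|²|^(-1/2) ≥ (k² + |ξ|²)^(-1/2)`;
integrating against `|φ̂|² ≥ 0` and using `Re w ≤ |w|` with `|1 + i| = √2` gives the bound.
The analytic input is the integrability of `Z⁻¹ |φ̂|²`: `Z⁻¹` is bounded away from the sphere,
and near it, in polar coordinates, it is dominated by the integrable `|r - k|^(-1/2)`.
-/

open MeasureTheory Complex Metric Set
open scoped FourierTransform

lemma Real.inv_sqrt_eq_rpow_neg_half {x : ℝ} (hx : 0 ≤ x) : (√x)⁻¹ = x ^ (-(1:ℝ)/2) := by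
  rw [Real.sqrt_eq_rpow, ← Real.rpow_neg hx]
  norm_num

lemma integral_le_norm_integral_of_le_re {α 𝕜 : Type*} [MeasurableSpace α] [RCLike 𝕜]
    {μ : Measure α} {f : α → ℝ} {g : α → 𝕜} (hg : Integrable g μ)
    (hfg : ∀ᵐ x ∂μ, f x ≤ RCLike.re (g x)) :
    ∫ x, f x ∂μ ≤ ‖∫ x, g x ∂μ‖ := by
  by_cases hf : Integrable f μ
  · calc ∫ x, f x ∂μ ≤ ∫ x, RCLike.re (g x) ∂μ := integral_mono_ae hf hg.re hfg
      _ = RCLike.re (∫ x, g x ∂μ) := integral_re hg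
      _ ≤ ‖∫ x, g x ∂μ‖ := RCLike.re_le_norm _
  · rw [integral_undef hf]
    exact norm_nonneg _

lemma MeasureTheory.Integrable.norm_sq_of_norm_le {α F : Type*} [MeasurableSpace α]
    [NormedAddCommGroup F] {μ : Measure α} {G : α → F} (hG : Integrable G μ) {C : ℝ}
    (hC : ∀ x, ‖G x‖ ≤ C) : Integrable (fun x => ‖G x‖ ^ 2) μ := by
  simpa only [sq] using hG.norm.bdd_mul hG.norm.aestronglyMeasurable
    (ae_of_all _ fun x => (norm_norm (G x)).trans_le (hC x))

/-- The paper's `Z(ξ)` as a function of `t = |ξ|`: the root of `k² - t²` with nonnegative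
imaginary part. -/
noncomputable def sqrtHelmholtz (k t : ℝ) : ℂ :=
  if t ≤ k then (Real.sqrt (k ^ 2 - t ^ 2) : ℂ) else I * (Real.sqrt (t ^ 2 - k ^ 2) : ℂ)

lemma measurable_sqrtHelmholtz (k : ℝ) : Measurable (sqrtHelmholtz k) :=
  Measurable.ite measurableSet_Iic (by fun_prop) (by fun_prop)

section Symbol

variable {k t : ℝ}

-- At `t = k` both sides of the next two lemmas vanish, through `0⁻¹ = 0` and `0 ^ (-1/2) = 0`.
lemma norm_inv_sqrtHelmholtz (hk : 0 ≤ k) (ht : 0 ≤ t) :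
    ‖(sqrtHelmholtz k t)⁻¹‖ = |k ^ 2 - t ^ 2| ^ (-(1:ℝ)/2) := by
  unfold sqrtHelmholtz
  split_ifs with htk
  · rw [norm_inv, norm_real, Real.norm_of_nonneg (Real.sqrt_nonneg _),
      abs_of_nonneg (by nlinarith), Real.inv_sqrt_eq_rpow_neg_half (by nlinarith)]
  · rw [norm_inv, norm_mul, norm_I, one_mul, norm_real, Real.norm_of_nonneg (Real.sqrt_nonneg _),
      abs_of_nonpos (by nlinarith), neg_sub, Real.inv_sqrt_eq_rpow_neg_half (by nlinarith)]

lemma re_one_add_I_mul_inv_sqrtHelmholtz (hk : 0 ≤ k) (ht : 0 ≤ t) :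
    ((1 + I) * (sqrtHelmholtz k t)⁻¹).re = |k ^ 2 - t ^ 2| ^ (-(1:ℝ)/2) := by
  unfold sqrtHelmholtz
  split_ifs with htk
  · rw [abs_of_nonneg (by nlinarith), ← Real.inv_sqrt_eq_rpow_neg_half (by nlinarith),
      ← ofReal_inv, re_mul_ofReal]
    simp
  · rw [abs_of_nonpos (by nlinarith), neg_sub, ← Real.inv_sqrt_eq_rpow_neg_half (by nlinarith),
      mul_inv, ← ofReal_inv, ← mul_assoc, re_mul_ofReal]
    simp

lemma add_sq_rpow_neg_half_le_abs_sub_sq_rpow (h : k ^ 2 ≠ t ^ 2) :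
    (k ^ 2 + t ^ 2) ^ (-(1:ℝ)/2) ≤ |k ^ 2 - t ^ 2| ^ (-(1:ℝ)/2) :=
  Real.rpow_le_rpow_of_nonpos (abs_pos.2 (sub_ne_zero.2 h))
    (by rw [abs_le]; constructor <;> nlinarith) (by norm_num)

end Symbol

lemma intervalIntegrable_abs_sub_rpow_neg_half (k a b : ℝ) :
    IntervalIntegrable (fun y : ℝ => |y - k| ^ (-(1:ℝ)/2)) volume a b := by
  have hloc : LocallyIntegrable (fun x : ℝ => |x| ^ (-(1:ℝ)/2)) :=
    locallyIntegrable_of_norm_le_rpow (μ := volume) (by simp) (C := 1) (α := 1/2) (by norm_num)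
      (ae_of_all _ fun x => by
        rw [one_mul, Real.norm_of_nonneg (by positivity), Real.norm_eq_abs]; norm_num)
      (continuous_abs.measurable.pow_const _).aestronglyMeasurable
  simpa using ((hloc.integrableOn_isCompact isCompact_uIcc).intervalIntegrable
    (a := a - k) (b := b - k)).comp_sub_right k

lemma integrableOn_Ioo_pow_mul_abs_sq_sub_sq_rpow {k : ℝ} (hk : 0 < k) (n : ℕ) (r : ℝ) :
    IntegrableOn (fun y : ℝ => y ^ n * |k ^ 2 - y ^ 2| ^ (-(1:ℝ)/2)) (Ioo 0 r) := by
  have hdom : IntegrableOn (fun y : ℝ => |y - k| ^ (-(1:ℝ)/2)) (Ioo 0 r) :=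
    (intervalIntegrable_abs_sub_rpow_neg_half k 0 r).def'.mono_set
      (Ioo_subset_Ioc_self.trans Ioc_subset_uIoc)
  refine (hdom.const_mul (r ^ n * k ^ (-(1:ℝ)/2))).mono' (by fun_prop) ?_
  refine ae_restrict_of_forall_mem measurableSet_Ioo fun y ⟨hy0, hyr⟩ => ?_
  have hfactor : |k ^ 2 - y ^ 2| = |y - k| * (y + k) := by
    rw [show k ^ 2 - y ^ 2 = -(y - k) * (y + k) by ring, abs_mul, abs_neg,
      abs_of_pos (show 0 < y + k by linarith)]
  rw [norm_mul, Real.norm_of_nonneg (by positivity), Real.norm_of_nonneg (by positivity), hfactor,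
    Real.mul_rpow (abs_nonneg _) (by linarith), mul_comm (|y - k| ^ _), mul_assoc (r ^ n)]
  have hpow : y ^ n ≤ r ^ n := pow_le_pow_left₀ hy0.le hyr.le n
  have hroot : (y + k) ^ (-(1:ℝ)/2) ≤ k ^ (-(1:ℝ)/2) :=
    Real.rpow_le_rpow_of_nonpos hk (by linarith) (by norm_num)
  gcongr
  exact pow_nonneg (hy0.trans hyr).le n

section HaarMeasure

variable {E : Type*} [NormedAddCommGroup E] [NormedSpace ℝ E] [MeasurableSpace E] [BorelSpace E]
  [FiniteDimensional ℝ E] [Nontrivial E] (μ : Measure E) [μ.IsAddHaarMeasure] {k : ℝ}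

lemma integrableOn_ball_abs_sq_sub_norm_sq_rpow (hk : 0 < k) (r : ℝ) :
    IntegrableOn (fun ξ : E => |k ^ 2 - ‖ξ‖ ^ 2| ^ (-(1:ℝ)/2)) (ball 0 r) μ := by
  rw [integrableOn_fun_norm_addHaar μ (f := fun y => |k ^ 2 - y ^ 2| ^ (-(1:ℝ)/2))]
  simpa only [smul_eq_mul] using integrableOn_Ioo_pow_mul_abs_sq_sub_sq_rpow hk _ r

lemma integrable_inv_sqrtHelmholtz_mul (hk : 0 < k) {F : E → ℂ} (hF : Integrable F μ) {C : ℝ}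
    (hC : ∀ ξ, ‖F ξ‖ ≤ C) :
    Integrable (fun ξ => (sqrtHelmholtz k ‖ξ‖)⁻¹ * F ξ) μ := by
  have hmeas : AEStronglyMeasurable (fun ξ : E => (sqrtHelmholtz k ‖ξ‖)⁻¹) μ :=
    ((measurable_sqrtHelmholtz k).comp measurable_norm).inv.aestronglyMeasurable
  have hnorm (ξ : E) : ‖(sqrtHelmholtz k ‖ξ‖)⁻¹‖ = |k ^ 2 - ‖ξ‖ ^ 2| ^ (-(1:ℝ)/2) :=
    norm_inv_sqrtHelmholtz hk.le (norm_nonneg ξ)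
  rw [← integrableOn_univ, ← union_compl_self (ball (0:E) (2 * k))]
  refine IntegrableOn.union ?_ ?_
  · have hball : IntegrableOn (fun ξ : E => (sqrtHelmholtz k ‖ξ‖)⁻¹) (ball 0 (2 * k)) μ := by
      rw [IntegrableOn, ← integrable_norm_iff hmeas.restrict]
      simp only [hnorm]
      exact integrableOn_ball_abs_sq_sub_norm_sq_rpow μ hk (2 * k)
    exact hball.mul_bdd hF.aestronglyMeasurable.restrict (ae_of_all _ hC)
  · refine hF.integrableOn.bdd_mul hmeas.restrict (c := (k ^ 2) ^ (-(1:ℝ)/2)) ?_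
    refine ae_restrict_of_forall_mem measurableSet_ball.compl fun ξ hξ => ?_
    rw [mem_compl_iff, mem_ball_zero_iff, not_lt] at hξ
    rw [hnorm]
    exact Real.rpow_le_rpow_of_nonpos (by positivity)
      (by rw [abs_of_nonpos (by nlinarith)]; nlinarith) (by norm_num)

end HaarMeasure

theorem norm_integral_inv_sqrtHelmholtz_mul_ge {E : Type*} [NormedAddCommGroup E]
    [NormedSpace ℝ E] [MeasurableSpace E] [BorelSpace E] [FiniteDimensional ℝ E] [Nontrivial E]
    (μ : Measure E) [μ.IsAddHaarMeasure] {k : ℝ} (hk : 0 < k) {F : E → ℝ} (hF0 : 0 ≤ F)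
    (hF : Integrable F μ) {C : ℝ} (hC : ∀ ξ, F ξ ≤ C) :
    (1 / (2 * √2)) * ∫ ξ, (k ^ 2 + ‖ξ‖ ^ 2) ^ (-(1:ℝ)/2) * F ξ ∂μ
      ≤ ‖(I / 2) * ∫ ξ, 1 / sqrtHelmholtz k ‖ξ‖ * (F ξ : ℂ) ∂μ‖ := by
  set c : ℝ := 1 / (2 * √2) with hc_def
  simp only [one_div (sqrtHelmholtz _ _)]
  have hint : Integrable (fun ξ => (sqrtHelmholtz k ‖ξ‖)⁻¹ * (F ξ : ℂ)) μ :=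
    integrable_inv_sqrtHelmholtz_mul μ hk hF.ofReal (C := C) fun ξ => by
      rw [norm_real, Real.norm_of_nonneg (hF0 ξ)]; exact hC ξ
  have hsphere : ∀ᵐ ξ ∂μ, k ^ 2 ≠ ‖ξ‖ ^ 2 := by
    refine measure_mono_null (fun ξ hξ => ?_) (Measure.addHaar_sphere_of_ne_zero μ 0 hk.ne')
    rw [mem_sphere_zero_iff_norm]
    exact ((pow_left_inj₀ hk.le (norm_nonneg ξ) two_ne_zero).1 (not_not.1 hξ)).symm
  have hnorm_coeff : ‖(c : ℂ) * (1 + I)‖ = ‖I / 2‖ := by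
    have : ‖(1 : ℂ) + I‖ = √2 := by
      rw [Complex.norm_def, Complex.normSq_apply]; norm_num
    rw [norm_mul, norm_real, this, Real.norm_of_nonneg (by positivity), norm_div, norm_I,
      RCLike.norm_ofNat, hc_def]
    field_simp
  calc c * ∫ ξ, (k ^ 2 + ‖ξ‖ ^ 2) ^ (-(1:ℝ)/2) * F ξ ∂μ
      = ∫ ξ, c * ((k ^ 2 + ‖ξ‖ ^ 2) ^ (-(1:ℝ)/2) * F ξ) ∂μ := (integral_const_mul _ _).symm
    _ ≤ ‖∫ ξ, (c : ℂ) * (1 + I) * ((sqrtHelmholtz k ‖ξ‖)⁻¹ * (F ξ : ℂ)) ∂μ‖ := by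
        refine integral_le_norm_integral_of_le_re (hint.const_mul _) ?_
        filter_upwards [hsphere] with ξ hξ
        rw [show (c : ℂ) * (1 + I) * ((sqrtHelmholtz k ‖ξ‖)⁻¹ * (F ξ : ℂ))
            = c * ((1 + I) * (sqrtHelmholtz k ‖ξ‖)⁻¹ * F ξ) by ring,
          RCLike.re_to_complex, re_ofReal_mul, re_mul_ofReal,
          re_one_add_I_mul_inv_sqrtHelmholtz hk.le (norm_nonneg ξ)]
        have hweight := add_sq_rpow_neg_half_le_abs_sub_sq_rpow hξ
        have hFξ := hF0 ξ
        gcongr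
    _ = ‖(I / 2) * ∫ ξ, (sqrtHelmholtz k ‖ξ‖)⁻¹ * (F ξ : ℂ) ∂μ‖ := by
        rw [integral_const_mul, norm_mul, hnorm_coeff, norm_mul]

lemma integral_exp_neg_inner_smul_eq_fourier {V E : Type*} [NormedAddCommGroup V]
    [InnerProductSpace ℝ V] [MeasurableSpace V] [BorelSpace V] [FiniteDimensional ℝ V]
    [NormedAddCommGroup E] [NormedSpace ℂ E] (f : V → E) (ξ : V) :
    ∫ x, exp (-I * ((inner ℝ ξ x : ℝ) : ℂ)) • f x = 𝓕 f ((2 * Real.pi)⁻¹ • ξ) := by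
  rw [Real.fourier_eq']
  congr 1 with x
  rw [real_inner_smul_right, real_inner_comm]
  congr 2
  push_cast
  field_simp

/-- Coercivity of the single-layer operator symbol: for Schwartz `φ` on `ℝ^m`, `m ∈ {1,2}`,
with `a(φ) = (i/2) ∫ (1/Z(ξ)) |φ̂(ξ)|² dξ`, one has
`|a(φ)| ≥ (1/(2√2)) ∫ (k²+|ξ|²)^{-1/2} |φ̂(ξ)|² dξ`. -/
theorem stmt_3 (m : ℕ) (hm : m = 1 ∨ m = 2) (k : ℝ) (hk : 0 < k)
    (φ : SchwartzMap (EuclideanSpace ℝ (Fin m)) ℂ) :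
    (1 / (2 * Real.sqrt 2)) *
      ∫ ξ : EuclideanSpace ℝ (Fin m),
        (k ^ 2 + ‖ξ‖ ^ 2) ^ (-(1:ℝ)/2) *
          ‖((2 * Real.pi) ^ (-(m : ℝ) / 2) : ℝ) •
            ∫ x : EuclideanSpace ℝ (Fin m),
              Complex.exp (-Complex.I * ((inner ℝ ξ x : ℝ) : ℂ)) • φ x‖ ^ 2
    ≤ norm ((Complex.I / 2) *
        ∫ ξ : EuclideanSpace ℝ (Fin m),
          (1 / (if ‖ξ‖ ≤ k then (Real.sqrt (k ^ 2 - ‖ξ‖ ^ 2) : ℂ)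
                else Complex.I * (Real.sqrt (‖ξ‖ ^ 2 - k ^ 2) : ℂ))) *
            (‖((2 * Real.pi) ^ (-(m : ℝ) / 2) : ℝ) •
              ∫ x : EuclideanSpace ℝ (Fin m),
                Complex.exp (-Complex.I * ((inner ℝ ξ x : ℝ) : ℂ)) • φ x‖ ^ 2 : ℝ)) := by
  have : Nontrivial (EuclideanSpace ℝ (Fin m)) :=
    Module.nontrivial_of_finrank_pos (R := ℝ) (by rw [finrank_euclideanSpace_fin]; omega)
  set c : ℝ := (2 * Real.pi) ^ (-(m : ℝ) / 2)
  set ψ := 𝓕 φ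
  set G := fun ξ : EuclideanSpace ℝ (Fin m) => c • ψ ((2 * Real.pi)⁻¹ • ξ)
  have hG : Integrable G := (ψ.integrable.comp_smul (by positivity)).smul c
  have hGC (ξ) : ‖G ξ‖ ≤ ‖c‖ * SchwartzMap.seminorm ℝ 0 0 ψ :=
    (norm_smul_le _ _).trans (by gcongr; exact SchwartzMap.norm_le_seminorm ℝ ψ _)
  simp only [integral_exp_neg_inner_smul_eq_fourier, ← SchwartzMap.fourier_coe]
  exact norm_integral_inv_sqrtHelmholtz_mul_ge volume hk (fun ξ => sq_nonneg ‖G ξ‖)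
    (hG.norm_sq_of_norm_le hGC) fun ξ => pow_le_pow_left₀ (norm_nonneg _) (hGC ξ) 2
end

section
/- Let L > 0, k > 0, s ≥ 0, and let χ ∈ C_c^∞(ℝ^m) be a fixed bump function with χ(y)=χ₀(|y|/L) where χ₀ ∈ C^∞(ℝ), χ₀(t)=1 for t≤1, χ₀(t)=0 for t≥2. Let d ∈ ℝ^m with |d| ≤ 1 and u(y) := e^{ik d·y} χ(y). Then there is C_s > 0, depending only on s, m and χ₀ (not on k, L, d), such that ‖u‖_{H^s_k(ℝ^m)} ≤ C_s L^{(m−2s)/2} (1 + kL)^s. -/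
open MeasureTheory

variable {m : ℕ}
local notation "E" => EuclideanSpace ℝ (Fin m)

lemma aux_smooth {χ₀ : ℝ → ℝ} (hχ : ContDiff ℝ (⊤ : ℕ∞) χ₀)
    (hχ1 : ∀ t ≤ (1:ℝ), χ₀ t = 1) :
    ContDiff ℝ (⊤ : ℕ∞) (fun z : E => χ₀ ‖z‖) := by
  rw [contDiff_iff_contDiffAt]
  intro z
  rcases lt_or_ge ‖z‖ 1 with h | h
  · have hev : (fun z : E => χ₀ ‖z‖) =ᶠ[nhds z] (fun _ => (1:ℝ)) := by
      have : Metric.ball (0:E) 1 ∈ nhds z := by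
        apply Metric.isOpen_ball.mem_nhds; simpa [Metric.mem_ball] using h
      filter_upwards [this] with w hw
      exact hχ1 _ (le_of_lt (by simpa [Metric.mem_ball] using hw))
    exact ContDiffAt.congr_of_eventuallyEq contDiffAt_const hev
  · have hz : z ≠ 0 := by
      intro h0; rw [h0, norm_zero] at h; linarith
    exact hχ.contDiffAt.comp z (contDiffAt_norm ℝ hz)

lemma aux_supp {χ₀ : ℝ → ℝ} (hχ0 : ∀ t ≥ (2:ℝ), χ₀ t = 0) :
    Function.support (fun z : E => χ₀ ‖z‖) ⊆ Metric.closedBall 0 2 := by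
  intro z hz
  simp only [Function.mem_support] at hz
  by_contra hb
  exact hz (hχ0 _ (le_of_lt (by simpa [Metric.mem_closedBall, not_le] using hb)))

noncomputable def auxF {χ₀ : ℝ → ℝ} (hχ : ContDiff ℝ (⊤ : ℕ∞) χ₀)
    (hχ1 : ∀ t ≤ (1:ℝ), χ₀ t = 1) (hχ0 : ∀ t ≥ (2:ℝ), χ₀ t = 0) :
    SchwartzMap (EuclideanSpace ℝ (Fin m)) ℂ where
  toFun := fun z => (χ₀ ‖z‖ : ℂ)
  smooth' := (Complex.ofRealCLM.contDiff.comp (aux_smooth hχ hχ1)).of_le (by simp)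
  decay' := by
    intro k n
    have hsm : ContDiff ℝ (⊤ : ℕ∞) (fun z : E => (χ₀ ‖z‖ : ℂ)) :=
      (Complex.ofRealCLM.contDiff.comp (aux_smooth hχ hχ1)).of_le (by simp)
    have hsupp : HasCompactSupport (fun z : E => (χ₀ ‖z‖ : ℂ)) := by
      apply HasCompactSupport.intro (isCompact_closedBall (0:E) 2)
      intro x hx
      have hx2 : (2:ℝ) ≤ ‖x‖ := by
        have := hx
        simp only [Metric.mem_closedBall, dist_zero_right, not_le] at this
        linarith
      simp [hχ0 _ hx2]
    have hc : Continuous (iteratedFDeriv ℝ n (fun z : E => (χ₀ ‖z‖ : ℂ))) :=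
      hsm.continuous_iteratedFDeriv (by exact_mod_cast le_top)
    obtain ⟨C, hC⟩ := (hsupp.iteratedFDeriv n).exists_bound_of_continuous hc
    refine ⟨2 ^ k * max C 0, fun x => ?_⟩
    rcases le_or_gt ‖x‖ 2 with h | h
    · have h1 : ‖x‖ ^ k ≤ 2 ^ k := pow_le_pow_left₀ (norm_nonneg _) h k
      exact mul_le_mul h1 ((hC x).trans (le_max_left _ _)) (norm_nonneg _) (by positivity)
    · have hts : tsupport (fun z : E => (χ₀ ‖z‖ : ℂ)) ⊆ Metric.closedBall (0:E) 2 := by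
        apply closure_minimal _ Metric.isClosed_closedBall
        intro z hz
        simp only [Function.mem_support] at hz
        simp only [Metric.mem_closedBall, dist_zero_right]
        by_contra hb
        exact hz (by simp [hχ0 _ (le_of_lt (not_le.mp hb))])
      have hx0 : iteratedFDeriv ℝ n (fun z : E => (χ₀ ‖z‖ : ℂ)) x = 0 := by
        apply image_eq_zero_of_notMem_tsupport
        intro hmem
        have := hts (tsupport_iteratedFDeriv_subset n hmem)
        simp only [Metric.mem_closedBall, dist_zero_right] at this
        linarith
      rw [hx0]
      simp only [norm_zero, mul_zero]
      positivity

open FourierTransform in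
lemma aux_decay {χ₀ : ℝ → ℝ} (hχ : ContDiff ℝ (⊤ : ℕ∞) χ₀)
    (hχ1 : ∀ t ≤ (1:ℝ), χ₀ t = 1) (hχ0 : ∀ t ≥ (2:ℝ), χ₀ t = 0) (N : ℕ) :
    ∃ C > 0, ∀ ζ : E,
      (1 + ‖ζ‖) ^ N * ‖∫ z : E, Complex.exp (-Complex.I * ((inner ℝ ζ z : ℝ) : ℂ)) •
        ((χ₀ ‖z‖ : ℝ) : ℂ)‖ ≤ C := by
  set F : SchwartzMap (EuclideanSpace ℝ (Fin m)) ℂ := auxF hχ hχ1 hχ0 with hF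
  set h : SchwartzMap (EuclideanSpace ℝ (Fin m)) ℂ := SchwartzMap.fourierTransformCLM ℂ F
  obtain ⟨C0, hC0⟩ := h.decay 0 0
  obtain ⟨CN, hCN⟩ := h.decay N 0
  have key : ∀ ζ : E, (∫ z : E, Complex.exp (-Complex.I * ((inner ℝ ζ z : ℝ) : ℂ)) •
      ((χ₀ ‖z‖ : ℝ) : ℂ)) = h ((2 * Real.pi)⁻¹ • ζ) := by
    intro ζ
    have : h ((2 * Real.pi)⁻¹ • ζ) = 𝓕 (⇑F) ((2 * Real.pi)⁻¹ • ζ) := by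
      simp [h, SchwartzMap.fourierTransformCLM_apply, SchwartzMap.fourier_coe]
    rw [this, Real.fourier_eq']
    apply integral_congr_ae
    filter_upwards with z
    have hinner : (inner ℝ z ((2 * Real.pi)⁻¹ • ζ) : ℝ) = (2 * Real.pi)⁻¹ * (inner ℝ ζ z : ℝ) := by
      rw [real_inner_smul_right, real_inner_comm]
    have hπ : (2 * Real.pi) ≠ 0 := by positivity
    have harg : (↑(-2 * Real.pi * (inner ℝ z ((2 * Real.pi)⁻¹ • ζ) : ℝ)) * Complex.I : ℂ)
        = -Complex.I * ((inner ℝ ζ z : ℝ) : ℂ) := by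
      have ht : -2 * Real.pi * ((2 * Real.pi)⁻¹ * (inner ℝ ζ z : ℝ)) = -(inner ℝ ζ z : ℝ) := by
        field_simp
      rw [hinner, ht]
      push_cast
      ring
    rw [harg]
    rfl
  have hb : ∀ t : ℝ, 0 ≤ t → (1 + t) ^ N ≤ 2 ^ N * (1 + t ^ N) := by
    intro t ht
    rcases le_or_gt t 1 with h1 | h1
    · calc (1 + t) ^ N ≤ 2 ^ N := by
            apply pow_le_pow_left₀ (by linarith) (by linarith)
        _ ≤ 2 ^ N * (1 + t ^ N) := by nlinarith [pow_nonneg ht N, pow_pos (show (0:ℝ)<2 by norm_num) N]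
    · calc (1 + t) ^ N ≤ (2 * t) ^ N := by
            apply pow_le_pow_left₀ (by linarith) (by linarith)
        _ = 2 ^ N * t ^ N := by rw [mul_pow]
        _ ≤ 2 ^ N * (1 + t ^ N) := by nlinarith [pow_pos (show (0:ℝ)<2 by norm_num) N]
  refine ⟨14 ^ N * (max C0 0 + max CN 0) + 1, by positivity, fun ζ => ?_⟩
  rw [key ζ]
  set x : E := (2 * Real.pi)⁻¹ • ζ with hx
  have hζx : ‖ζ‖ = 2 * Real.pi * ‖x‖ := by
    rw [hx, norm_smul, Real.norm_eq_abs, abs_of_pos (by positivity)]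
    field_simp
  have h7 : 1 + ‖ζ‖ ≤ 7 * (1 + ‖x‖) := by
    rw [hζx]
    have := Real.pi_lt_d2
    nlinarith [norm_nonneg x]
  have hN0 : ‖h x‖ ≤ max C0 0 := by
    have := hC0.2 x
    simp only [pow_zero, one_mul, norm_iteratedFDeriv_zero] at this
    exact this.trans (le_max_left _ _)
  have hNN : ‖x‖ ^ N * ‖h x‖ ≤ max CN 0 := by
    have := hCN.2 x
    simp only [norm_iteratedFDeriv_zero] at this
    exact this.trans (le_max_left _ _)
  calc (1 + ‖ζ‖) ^ N * ‖h x‖ ≤ (7 * (1 + ‖x‖)) ^ N * ‖h x‖ := by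
        apply mul_le_mul_of_nonneg_right _ (norm_nonneg _)
        exact pow_le_pow_left₀ (by positivity) h7 N
    _ = 7 ^ N * ((1 + ‖x‖) ^ N * ‖h x‖) := by rw [mul_pow]; ring
    _ ≤ 7 ^ N * ((2 ^ N * (1 + ‖x‖ ^ N)) * ‖h x‖) := by
        apply mul_le_mul_of_nonneg_left _ (by positivity)
        exact mul_le_mul_of_nonneg_right (hb _ (norm_nonneg _)) (norm_nonneg _)
    _ = 14 ^ N * (‖h x‖ + ‖x‖ ^ N * ‖h x‖) := by ring_nf; rw [show (14:ℝ) = 7 * 2 by norm_num, mul_pow]; ring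
    _ ≤ 14 ^ N * (max C0 0 + max CN 0) := by
        apply mul_le_mul_of_nonneg_left (add_le_add hN0 hNN) (by positivity)
    _ ≤ 14 ^ N * (max C0 0 + max CN 0) + 1 := by linarith

lemma aux_inner {χ₀ : ℝ → ℝ} (hχ : ContDiff ℝ (⊤ : ℕ∞) χ₀)
    (hχ1 : ∀ t ≤ (1:ℝ), χ₀ t = 1) (hχ0 : ∀ t ≥ (2:ℝ), χ₀ t = 0) (N : ℕ) :
    ∃ C > 0, ∀ k > (0:ℝ), ∀ L > (0:ℝ), ∀ d : E, ∀ ξ : E,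
      (1 + L * ‖ξ - k • d‖) ^ N *
        ‖∫ y : E, Complex.exp (-Complex.I * ((inner ℝ ξ y : ℝ) : ℂ)) •
          (Complex.exp (Complex.I * k * ((inner ℝ d y : ℝ) : ℂ)) * ((χ₀ (‖y‖ / L) : ℝ) : ℂ))‖
      ≤ C * L ^ m := by
  obtain ⟨C, hCpos, hC⟩ := aux_decay (m := m) hχ hχ1 hχ0 N
  refine ⟨C, hCpos, fun k hk L hL d ξ => ?_⟩
  set w : E := ξ - k • d with hw
  have step1 : (∫ y : E, Complex.exp (-Complex.I * ((inner ℝ ξ y : ℝ) : ℂ)) •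
          (Complex.exp (Complex.I * k * ((inner ℝ d y : ℝ) : ℂ)) * ((χ₀ (‖y‖ / L) : ℝ) : ℂ)))
      = ∫ y : E, Complex.exp (-Complex.I * ((inner ℝ w y : ℝ) : ℂ)) • ((χ₀ (‖y‖ / L) : ℝ) : ℂ) := by
    apply integral_congr_ae
    filter_upwards with y
    have hiw : (inner ℝ w y : ℝ) = (inner ℝ ξ y : ℝ) - k * (inner ℝ d y : ℝ) := by
      rw [hw, inner_sub_left, real_inner_smul_left]
    rw [smul_eq_mul, smul_eq_mul, ← mul_assoc, ← Complex.exp_add]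
    congr 2
    rw [hiw]
    push_cast
    ring
  have step2 : (∫ y : E, Complex.exp (-Complex.I * ((inner ℝ w y : ℝ) : ℂ)) • ((χ₀ (‖y‖ / L) : ℝ) : ℂ))
      = (L:ℝ) ^ m • ∫ z : E, Complex.exp (-Complex.I * ((inner ℝ (L • w) z : ℝ) : ℂ)) •
          ((χ₀ ‖z‖ : ℝ) : ℂ) := by
    have := MeasureTheory.Measure.integral_comp_smul (μ := (volume : Measure E))
      (f := fun y : E => Complex.exp (-Complex.I * ((inner ℝ w y : ℝ) : ℂ)) • ((χ₀ (‖y‖ / L) : ℝ) : ℂ)) L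
    have hfin : Module.finrank ℝ E = m := finrank_euclideanSpace_fin
    rw [hfin] at this
    have heq : ∀ z : E, Complex.exp (-Complex.I * ((inner ℝ w (L • z) : ℝ) : ℂ)) •
        ((χ₀ (‖L • z‖ / L) : ℝ) : ℂ)
        = Complex.exp (-Complex.I * ((inner ℝ (L • w) z : ℝ) : ℂ)) • ((χ₀ ‖z‖ : ℝ) : ℂ) := by
      intro z
      have h1 : (inner ℝ w (L • z) : ℝ) = (inner ℝ (L • w) z : ℝ) := by
        rw [real_inner_smul_right, real_inner_smul_left]
      have h2 : ‖L • z‖ / L = ‖z‖ := by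
        rw [norm_smul, Real.norm_eq_abs, abs_of_pos hL]
        field_simp
      rw [h1, h2]
    simp_rw [heq] at this
    rw [this, smul_smul]
    have : |((L ^ m : ℝ))⁻¹| = (L ^ m)⁻¹ := abs_of_pos (by positivity)
    rw [this, mul_inv_cancel₀ (by positivity), one_smul]
  rw [step1, step2]
  have hnLw : ‖L • w‖ = L * ‖w‖ := by
    rw [norm_smul, Real.norm_eq_abs, abs_of_pos hL]
  have := hC (L • w)
  rw [hnLw] at this
  calc (1 + L * ‖w‖) ^ N * ‖(L:ℝ) ^ m • ∫ z : E,
        Complex.exp (-Complex.I * ((inner ℝ (L • w) z : ℝ) : ℂ)) • ((χ₀ ‖z‖ : ℝ) : ℂ)‖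
      = L ^ m * ((1 + L * ‖w‖) ^ N * ‖∫ z : E,
        Complex.exp (-Complex.I * ((inner ℝ (L • w) z : ℝ) : ℂ)) • ((χ₀ ‖z‖ : ℝ) : ℂ)‖) := by
        rw [norm_smul, Real.norm_eq_abs, abs_of_pos (by positivity)]
        ring
    _ ≤ L ^ m * C := by
        apply mul_le_mul_of_nonneg_left this (by positivity)
    _ = C * L ^ m := by ring

lemma aux_pointwise {k L r c C1 nI x s : ℝ} {N m : ℕ}
    (hk : 0 < k) (hL : 0 < L) (hr : 0 ≤ r) (hc : 0 < c) (hC1 : 0 < C1)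
    (hs : 0 ≤ s) (hIb : (1 + r) ^ N * nI ≤ C1 * L ^ m) (hnI : 0 ≤ nI)
    (hxi : L * x ≤ r + k * L) (hx : 0 ≤ x) :
    (k ^ 2 + x ^ 2) ^ s * (c * nI) ^ 2 ≤
      c ^ 2 * C1 ^ 2 * (4:ℝ) ^ s * L ^ (2 * (m:ℝ) - 2 * s) * (1 + k * L) ^ (2 * s) *
        (1 + r) ^ (2 * s - 2 * (N:ℝ)) := by
  have h1r : (0:ℝ) < 1 + r := by linarith
  have hX : (0:ℝ) < 1 + k * L := by positivity
  have hIb' : nI ≤ C1 * L ^ m / (1 + r) ^ N := by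
    rw [le_div_iff₀ (by positivity)]
    calc nI * (1 + r) ^ N = (1 + r) ^ N * nI := by ring
      _ ≤ C1 * L ^ m := hIb
  have hZ : k ^ 2 + x ^ 2 ≤ ((1 + k * L) * (2 * (1 + r)) / L) ^ 2 := by
    rw [div_pow, le_div_iff₀ (by positivity)]
    have h1 : (L * x) ^ 2 ≤ (r + k * L) ^ 2 :=
      pow_le_pow_left₀ (by positivity) hxi 2
    nlinarith [h1, mul_pos hk hL, sq_nonneg r, sq_nonneg (k * L),
      mul_nonneg hr (mul_pos hk hL).le]
  calc (k ^ 2 + x ^ 2) ^ s * (c * nI) ^ 2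
      ≤ (((1 + k * L) * (2 * (1 + r)) / L) ^ 2) ^ s * (c * (C1 * L ^ m / (1 + r) ^ N)) ^ 2 := by
        apply mul_le_mul (Real.rpow_le_rpow (by positivity) hZ hs) _ (by positivity)
          (Real.rpow_nonneg (by positivity) s)
        exact pow_le_pow_left₀ (by positivity) (mul_le_mul_of_nonneg_left hIb' hc.le) 2
    _ = c ^ 2 * C1 ^ 2 * (4:ℝ) ^ s * L ^ (2 * (m:ℝ) - 2 * s) * (1 + k * L) ^ (2 * s) *
        (1 + r) ^ (2 * s - 2 * (N:ℝ)) := by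
        rw [show (4:ℝ) = 2 ^ (2:ℕ) by norm_num]
        rw [mul_pow c, div_pow (C1 * L ^ m), mul_pow C1, ← pow_mul L m 2, ← pow_mul (1+r) N 2]
        rw [← Real.rpow_natCast (((1 + k * L) * (2 * (1 + r)) / L)) 2,
          ← Real.rpow_natCast ((2:ℝ)) 2, ← Real.rpow_natCast L (m*2),
          ← Real.rpow_natCast (1+r) (N*2), ← Real.rpow_natCast c 2,
          ← Real.rpow_natCast C1 2]
        rw [← Real.rpow_mul (by positivity), ← Real.rpow_mul (by positivity)]
        rw [Real.div_rpow (by positivity) hL.le, Real.mul_rpow hX.le (by positivity),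
          Real.mul_rpow (by norm_num) h1r.le]
        rw [Real.rpow_sub hL, Real.rpow_sub h1r]
        push_cast
        field_simp

lemma aux_integral {p : ℝ} (hp : ((m:ℕ):ℝ) < p) {L : ℝ} (hL : 0 < L) (a : E) :
    Integrable (fun ξ : E => (1 + L * ‖ξ - a‖) ^ (-p)) (volume : Measure E) ∧
    (∫ ξ : E, (1 + L * ‖ξ - a‖) ^ (-p)) =
      L ^ (-(m:ℝ)) * ∫ x : E, (1 + ‖x‖) ^ (-p) := by
  have hfr : ((Module.finrank ℝ (EuclideanSpace ℝ (Fin m))):ℝ) < p := by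
    rw [finrank_euclideanSpace_fin]; exact hp
  have hf0 : Integrable (fun x : E => (1 + ‖x‖) ^ (-p)) (volume : Measure E) :=
    integrable_one_add_norm hfr
  have heq : ∀ ξ : E, (1 + L * ‖ξ - a‖) ^ (-p) =
      (fun η : E => (1 + ‖L • η‖) ^ (-p)) (ξ - a) := by
    intro ξ
    simp only [norm_smul, Real.norm_eq_abs, abs_of_pos hL]
  have hG : Integrable (fun η : E => (1 + ‖L • η‖) ^ (-p)) (volume : Measure E) := by
    exact Integrable.comp_smul (f := fun x : E => (1 + ‖x‖) ^ (-p)) hf0 hL.ne'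
  constructor
  · simp_rw [heq]
    exact hG.comp_sub_right a
  · calc (∫ ξ : E, (1 + L * ‖ξ - a‖) ^ (-p))
        = ∫ ξ : E, (fun η : E => (1 + ‖L • η‖) ^ (-p)) (ξ - a) := by
          exact integral_congr_ae (Filter.Eventually.of_forall heq)
      _ = ∫ η : E, (1 + ‖L • η‖) ^ (-p) :=
          integral_sub_right_eq_self (μ := (volume : Measure E)) (fun η : E => (1 + ‖L • η‖) ^ (-p)) a
      _ = L ^ (-(m:ℝ)) * ∫ x : E, (1 + ‖x‖) ^ (-p) := by
          have := MeasureTheory.Measure.integral_comp_smul (μ := (volume : Measure E))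
            (f := fun x : E => (1 + ‖x‖) ^ (-p)) L
          rw [finrank_euclideanSpace_fin] at this
          rw [this, smul_eq_mul]
          congr 1
          rw [abs_of_pos (by positivity), ← Real.rpow_natCast L m, ← Real.rpow_neg hL.le]

/-- H^s_k-norm bound for a modulated bump: with `u(y) = e^{ik d·y} χ₀(|y|/L)`,
`‖u‖_{H^s_k(ℝ^m)} ≤ C L^{(m−2s)/2} (1 + kL)^s` with `C` independent of `k, L, d`. -/
theorem stmt_15 (m : ℕ) (χ₀ : ℝ → ℝ) (hχ : ContDiff ℝ (⊤ : ℕ∞) χ₀)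
    (hχ1 : ∀ t ≤ (1:ℝ), χ₀ t = 1) (hχ0 : ∀ t ≥ (2:ℝ), χ₀ t = 0)
    (s : ℝ) (hs : 0 ≤ s) :
    ∃ C > 0, ∀ k > (0:ℝ), ∀ L > (0:ℝ), ∀ d : EuclideanSpace ℝ (Fin m), ‖d‖ ≤ 1 →
      (∫ ξ : EuclideanSpace ℝ (Fin m),
          (k ^ 2 + ‖ξ‖ ^ 2) ^ s *
            ‖((2 * Real.pi) ^ (-(m : ℝ) / 2) : ℝ) •
              ∫ y : EuclideanSpace ℝ (Fin m),
                Complex.exp (-Complex.I * ((inner ℝ ξ y : ℝ) : ℂ)) •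
                  (Complex.exp (Complex.I * k * ((inner ℝ d y : ℝ) : ℂ)) *
                    (χ₀ (‖y‖ / L) : ℂ))‖ ^ 2) ^ ((1:ℝ)/2)
        ≤ C * L ^ (((m : ℝ) - 2 * s) / 2) * (1 + k * L) ^ s := by
  set N : ℕ := ⌈s⌉₊ + m + 1 with hN
  have hsceil := Nat.le_ceil s
  obtain ⟨C1, hC1pos, hC1⟩ := aux_inner (m := m) hχ hχ1 hχ0 N
  set p : ℝ := 2 * (N:ℝ) - 2 * s with hpdef
  have hmp : ((m:ℕ):ℝ) < p := by
    rw [hpdef, hN]; push_cast; linarith [Nat.cast_nonneg (α := ℝ) m]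
  set I0 : ℝ := ∫ x : EuclideanSpace ℝ (Fin m), (1 + ‖x‖) ^ (-p) with hI0
  have hI0nn : 0 ≤ I0 :=
    integral_nonneg fun x => Real.rpow_nonneg (by positivity) _
  set c : ℝ := ((2 * Real.pi) ^ (-(m : ℝ) / 2) : ℝ) with hcdef
  have hc : 0 < c := Real.rpow_pos_of_pos (by positivity) _
  set B : ℝ := c ^ 2 * C1 ^ 2 * (4:ℝ) ^ s * I0 with hB
  have hBnn : 0 ≤ B := by positivity
  refine ⟨B ^ ((1:ℝ)/2) + 1, by positivity, fun k hk L hL d hd => ?_⟩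
  set D : ℝ := c ^ 2 * C1 ^ 2 * (4:ℝ) ^ s * L ^ (2 * (m:ℝ) - 2 * s) * (1 + k * L) ^ (2 * s)
    with hD
  have hDnn : 0 ≤ D := by
    have h1 : (0:ℝ) ≤ L ^ (2 * (m:ℝ) - 2 * s) := Real.rpow_nonneg hL.le _
    have h2 : (0:ℝ) ≤ (1 + k * L) ^ (2 * s) := Real.rpow_nonneg (by positivity) _
    positivity
  obtain ⟨hgInt, hgIntEq⟩ := aux_integral (m := m) hmp hL (k • d)
  have hfg : ∀ ξ : EuclideanSpace ℝ (Fin m),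
      (k ^ 2 + ‖ξ‖ ^ 2) ^ s *
        ‖c • ∫ y : EuclideanSpace ℝ (Fin m),
          Complex.exp (-Complex.I * ((inner ℝ ξ y : ℝ) : ℂ)) •
            (Complex.exp (Complex.I * k * ((inner ℝ d y : ℝ) : ℂ)) *
              (χ₀ (‖y‖ / L) : ℂ))‖ ^ 2
      ≤ D * (1 + L * ‖ξ - k • d‖) ^ (-p) := by
    intro ξ
    have hnrm : ‖c • ∫ y : EuclideanSpace ℝ (Fin m),
        Complex.exp (-Complex.I * ((inner ℝ ξ y : ℝ) : ℂ)) •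
          (Complex.exp (Complex.I * k * ((inner ℝ d y : ℝ) : ℂ)) *
            (χ₀ (‖y‖ / L) : ℂ))‖
        = c * ‖∫ y : EuclideanSpace ℝ (Fin m),
        Complex.exp (-Complex.I * ((inner ℝ ξ y : ℝ) : ℂ)) •
          (Complex.exp (Complex.I * k * ((inner ℝ d y : ℝ) : ℂ)) *
            (χ₀ (‖y‖ / L) : ℂ))‖ := by
      rw [norm_smul, Real.norm_eq_abs, abs_of_pos hc]
    have hxi : L * ‖ξ‖ ≤ L * ‖ξ - k • d‖ + k * L := by
      have h1 : ‖ξ‖ ≤ ‖ξ - k • d‖ + ‖k • d‖ := by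
        calc ‖ξ‖ = ‖(ξ - k • d) + k • d‖ := by rw [sub_add_cancel]
          _ ≤ ‖ξ - k • d‖ + ‖k • d‖ := norm_add_le _ _
      have h2 : ‖k • d‖ ≤ k := by
        rw [norm_smul, Real.norm_eq_abs, abs_of_pos hk]
        nlinarith
      have h3 : ‖ξ‖ ≤ ‖ξ - k • d‖ + k := by linarith
      calc L * ‖ξ‖ ≤ L * (‖ξ - k • d‖ + k) := by
            exact mul_le_mul_of_nonneg_left h3 hL.le
        _ = L * ‖ξ - k • d‖ + k * L := by ring
    have hbd := aux_pointwise (m := m) (N := N) hk hL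
      (r := L * ‖ξ - k • d‖) (by positivity) hc hC1pos hs
      (hC1 k hk L hL d ξ) (norm_nonneg _) hxi (norm_nonneg _)
    rw [hnrm]
    have hexp : 2 * s - 2 * (N:ℝ) = -p := by rw [hpdef]; ring
    rw [hexp] at hbd
    exact le_trans hbd (le_of_eq (by rw [hD]))
  have hmono : (∫ ξ : EuclideanSpace ℝ (Fin m),
      (k ^ 2 + ‖ξ‖ ^ 2) ^ s *
        ‖c • ∫ y : EuclideanSpace ℝ (Fin m),
          Complex.exp (-Complex.I * ((inner ℝ ξ y : ℝ) : ℂ)) •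
            (Complex.exp (Complex.I * k * ((inner ℝ d y : ℝ) : ℂ)) *
              (χ₀ (‖y‖ / L) : ℂ))‖ ^ 2)
      ≤ D * (L ^ (-(m:ℝ)) * I0) := by
    calc (∫ ξ : EuclideanSpace ℝ (Fin m), (k ^ 2 + ‖ξ‖ ^ 2) ^ s *
        ‖c • ∫ y : EuclideanSpace ℝ (Fin m),
          Complex.exp (-Complex.I * ((inner ℝ ξ y : ℝ) : ℂ)) •
            (Complex.exp (Complex.I * k * ((inner ℝ d y : ℝ) : ℂ)) *
              (χ₀ (‖y‖ / L) : ℂ))‖ ^ 2)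
        ≤ ∫ ξ : EuclideanSpace ℝ (Fin m), D * (1 + L * ‖ξ - k • d‖) ^ (-p) := by
          apply integral_mono_of_nonneg
          · filter_upwards with ξ
            have : (0:ℝ) ≤ (k ^ 2 + ‖ξ‖ ^ 2) ^ s := Real.rpow_nonneg (by positivity) _
            positivity
          · exact hgInt.const_mul D
          · filter_upwards with ξ
            exact hfg ξ
      _ = D * ∫ ξ : EuclideanSpace ℝ (Fin m), (1 + L * ‖ξ - k • d‖) ^ (-p) :=
          integral_const_mul D _
      _ = D * (L ^ (-(m:ℝ)) * I0) := by rw [hgIntEq]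
  have hfinal : (∫ ξ : EuclideanSpace ℝ (Fin m),
      (k ^ 2 + ‖ξ‖ ^ 2) ^ s *
        ‖c • ∫ y : EuclideanSpace ℝ (Fin m),
          Complex.exp (-Complex.I * ((inner ℝ ξ y : ℝ) : ℂ)) •
            (Complex.exp (Complex.I * k * ((inner ℝ d y : ℝ) : ℂ)) *
              (χ₀ (‖y‖ / L) : ℂ))‖ ^ 2) ^ ((1:ℝ)/2)
      ≤ (D * (L ^ (-(m:ℝ)) * I0)) ^ ((1:ℝ)/2) := by
    apply Real.rpow_le_rpow _ hmono (by norm_num)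
    apply integral_nonneg
    intro ξ
    have : (0:ℝ) ≤ (k ^ 2 + ‖ξ‖ ^ 2) ^ s := Real.rpow_nonneg (by positivity) _
    positivity
  refine le_trans hfinal ?_
  have hDL : D * (L ^ (-(m:ℝ)) * I0)
      = B * (L ^ ((m:ℝ) - 2 * s) * (1 + k * L) ^ (2 * s)) := by
    rw [hD, hB]
    have h5 : L ^ (2 * (m:ℝ) - 2 * s) * L ^ (-(m:ℝ)) = L ^ ((m:ℝ) - 2 * s) := by
      rw [← Real.rpow_add hL]; ring_nf
    calc c ^ 2 * C1 ^ 2 * (4:ℝ) ^ s * L ^ (2 * (m:ℝ) - 2 * s) * (1 + k * L) ^ (2 * s) *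
          (L ^ (-(m:ℝ)) * I0)
        = (c ^ 2 * C1 ^ 2 * (4:ℝ) ^ s * I0) *
            ((L ^ (2 * (m:ℝ) - 2 * s) * L ^ (-(m:ℝ))) * (1 + k * L) ^ (2 * s)) := by ring
      _ = B * (L ^ ((m:ℝ) - 2 * s) * (1 + k * L) ^ (2 * s)) := by rw [h5, hB]
  rw [hDL]
  have e1 : (L ^ ((m:ℝ) - 2 * s)) ^ ((1:ℝ)/2) = L ^ (((m:ℝ) - 2 * s) / 2) := by
    rw [← Real.rpow_mul hL.le, mul_one_div]
  have e2 : ((1 + k * L) ^ (2 * s)) ^ ((1:ℝ)/2) = (1 + k * L) ^ s := by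
    rw [← Real.rpow_mul (by positivity), show 2 * s * ((1:ℝ)/2) = s by ring]
  rw [Real.mul_rpow hBnn (by positivity),
    Real.mul_rpow (Real.rpow_nonneg hL.le _) (Real.rpow_nonneg (by positivity) _), e1, e2]
  have hX : (0:ℝ) ≤ L ^ (((m:ℝ) - 2 * s) / 2) := Real.rpow_nonneg hL.le _
  have hY : (0:ℝ) ≤ (1 + k * L) ^ s := Real.rpow_nonneg (by positivity) _
  have hB12 : B ^ ((1:ℝ)/2) ≤ B ^ ((1:ℝ)/2) + 1 := by linarith
  calc B ^ ((1:ℝ)/2) * (L ^ (((m:ℝ) - 2 * s) / 2) * (1 + k * L) ^ s)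
      = B ^ ((1:ℝ)/2) * L ^ (((m:ℝ) - 2 * s) / 2) * (1 + k * L) ^ s := by ring
    _ ≤ (B ^ ((1:ℝ)/2) + 1) * L ^ (((m:ℝ) - 2 * s) / 2) * (1 + k * L) ^ s := by
        gcongr
end
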